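/- arXiv:1902.08685 — 2 statements merged into one kernel-verified Lean document; each statement's English description precedes it below -/
import Mathlib

section
/- Let h be a classical periodic solution of the regularized Model I equation on [0,T], and define 𝓔(u) = (1/2)·∫_{−a}^{a} ( u_x(x)² − u(x)² ) dx. Then for every T′ ∈ [0,T], 𝓔(h(·,T′)) + S·∫_0^{T′} ∫_{−a}^{a} (|h|³ + ε)·( h_x + h_xxx )² dx dt = 𝓔(h(·,0)) − (1/2)·∫_0^{T′} ∫_{−a}^{a} h²·h_xxx dx dt. -/
/-- A classical periodic solution of the regularized Model I equation
`h_t = -h h_x - S ∂_x[(|h|³+ε)(h_x+h_xxx)]` on `ℝ × [0,T]`, `2a`-periodic in `x`,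
with continuous partial derivatives `∂_x^j h`, `0 ≤ j ≤ 4`, and `∂_t h`. -/
structure ClassicalSolutionI (a S ε T : ℝ) (h hx hxx hxxx hxxxx ht : ℝ → ℝ → ℝ) : Prop where
  periodic_x : ∀ x t, h (x + 2 * a) t = h x t
  cont_h : ContinuousOn (fun p : ℝ × ℝ => h p.1 p.2) (Set.univ ×ˢ Set.Icc 0 T)
  cont_hx : ContinuousOn (fun p : ℝ × ℝ => hx p.1 p.2) (Set.univ ×ˢ Set.Icc 0 T)
  cont_hxx : ContinuousOn (fun p : ℝ × ℝ => hxx p.1 p.2) (Set.univ ×ˢ Set.Icc 0 T)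
  cont_hxxx : ContinuousOn (fun p : ℝ × ℝ => hxxx p.1 p.2) (Set.univ ×ˢ Set.Icc 0 T)
  cont_hxxxx : ContinuousOn (fun p : ℝ × ℝ => hxxxx p.1 p.2) (Set.univ ×ˢ Set.Icc 0 T)
  cont_ht : ContinuousOn (fun p : ℝ × ℝ => ht p.1 p.2) (Set.univ ×ˢ Set.Icc 0 T)
  deriv_hx : ∀ x : ℝ, ∀ t ∈ Set.Icc (0:ℝ) T, HasDerivAt (fun y => h y t) (hx x t) x
  deriv_hxx : ∀ x : ℝ, ∀ t ∈ Set.Icc (0:ℝ) T, HasDerivAt (fun y => hx y t) (hxx x t) x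
  deriv_hxxx : ∀ x : ℝ, ∀ t ∈ Set.Icc (0:ℝ) T, HasDerivAt (fun y => hxx y t) (hxxx x t) x
  deriv_hxxxx : ∀ x : ℝ, ∀ t ∈ Set.Icc (0:ℝ) T, HasDerivAt (fun y => hxxx y t) (hxxxx x t) x
  deriv_ht : ∀ x : ℝ, ∀ t ∈ Set.Icc (0:ℝ) T,
    HasDerivWithinAt (fun s => h x s) (ht x t) (Set.Icc 0 T) t
  /-- The PDE `h_t = -h h_x - S ∂_x[(|h|³+ε)(h_x+h_xxx)]`, stated as: the flux
  `S (|h|³+ε)(h_x+h_xxx)` has spatial derivative `-h_t - h h_x`. -/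
  pde : ∀ x : ℝ, ∀ t ∈ Set.Icc (0:ℝ) T,
    HasDerivAt (fun y => S * ((|h y t| ^ 3 + ε) * (hx y t + hxxx y t)))
      (-(ht x t) - h x t * hx x t) x

/-!
With `𝓔(t) = ½∫(h_x² - h²)`, the difficulty is that `h_x` has no time derivative. Integrating by
parts, `𝓔(t) = -½ B(t,t)` with `B(s,r) = ∫ h(·,s) w(·,r)`, `w = h_xx + h`, and `B` is symmetric
because `∂² + 1` is symmetric on periodic functions. Symmetry gives
`B(s,s) - B(t,t) = ∫ (h(·,s) - h(·,t)) (w(·,s) + w(·,t))`, in which only difference quotients of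
`h` occur, so `𝓔' = -∫ h_t w`. Substituting the equation for `h_t` and integrating by parts (the
transport term contributes `½∫ h² h_xxx`, the flux term the dissipation) gives
`𝓔' = -S ∫ (|h|³+ε)(h_x+h_xxx)² - ½ ∫ h² h_xxx`; it remains to integrate in time.
-/

open Set Function intervalIntegral
open MeasureTheory (volume)

theorem Function.Periodic.apply_eq_apply_neg {α β : Type*} [Ring α] {f : α → β} {a : α}
    (hf : Periodic f (2 * a)) : f a = f (-a) := by
  simpa [two_mul] using hf (-a)

theorem Function.Periodic.of_hasDerivAt {𝕜 F : Type*} [NontriviallyNormedField 𝕜]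
    [NormedAddCommGroup F] [NormedSpace 𝕜 F] {f f' : 𝕜 → F} {c : 𝕜} (hf : Periodic f c)
    (hderiv : ∀ x, HasDerivAt f (f' x) x) : Periodic f' c := fun x =>
  ((hderiv (x + c)).comp_add_const x c).unique (by rw [hf.funext]; exact hderiv x)

theorem integral_mul_deriv_eq_neg_deriv_mul {a b : ℝ} {u u' v v' : ℝ → ℝ}
    (hu : ∀ x ∈ uIcc a b, HasDerivAt u (u' x) x) (hv : ∀ x ∈ uIcc a b, HasDerivAt v (v' x) x)
    (hu' : IntervalIntegrable u' volume a b) (hv' : IntervalIntegrable v' volume a b)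
    (hb : u b * v b = u a * v a) :
    ∫ x in a..b, u x * v' x = -∫ x in a..b, u' x * v x := by
  rw [integral_mul_deriv_eq_deriv_mul hu hv hu' hv', hb, sub_self, zero_sub]

theorem integral_mul_second_deriv_add {a b : ℝ} {f f₁ g g₁ g₂ : ℝ → ℝ}
    (hf : ∀ x, HasDerivAt f (f₁ x) x) (hg : ∀ x, HasDerivAt g (g₁ x) x)
    (hg₁ : ∀ x, HasDerivAt g₁ (g₂ x) x) (hf₁ : Continuous f₁) (hg₂ : Continuous g₂)
    (hb : f b * g₁ b = f a * g₁ a) :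
    ∫ x in a..b, f x * (g₂ x + g x) = ∫ x in a..b, (f x * g x - f₁ x * g₁ x) := by
  have cf : Continuous f := continuous_iff_continuousAt.2 fun x => (hf x).continuousAt
  have cg : Continuous g := continuous_iff_continuousAt.2 fun x => (hg x).continuousAt
  have cg₁ : Continuous g₁ := continuous_iff_continuousAt.2 fun x => (hg₁ x).continuousAt
  have hibp := integral_mul_deriv_eq_neg_deriv_mul (fun x _ => hf x) (fun x _ => hg₁ x)
    (hf₁.intervalIntegrable a b) (hg₂.intervalIntegrable a b) hb
  simp only [mul_add, sub_eq_add_neg]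
  rw [integral_add, integral_add, integral_neg, hibp, add_comm]
  all_goals exact Continuous.intervalIntegrable (by fun_prop) a b

theorem integral_mul_second_deriv_add_of_conservation {a b : ℝ} {u u₁ u₂ u₃ g F : ℝ → ℝ}
    (hu : ∀ x, HasDerivAt u (u₁ x) x) (hu₁ : ∀ x, HasDerivAt u₁ (u₂ x) x)
    (hu₂ : ∀ x, HasDerivAt u₂ (u₃ x) x) (hF : ∀ x, HasDerivAt F (-g x - u x * u₁ x) x)
    (hu₃ : Continuous u₃) (hg : Continuous g)
    (hub : u b = u a) (hu₂b : u₂ b = u₂ a) (hFb : F b = F a) :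
    ∫ x in a..b, g x * (u₂ x + u x)
      = (∫ x in a..b, (u₃ x + u₁ x) * F x) + (1 / 2) * ∫ x in a..b, u x ^ 2 * u₃ x := by
  have cu : Continuous u := continuous_iff_continuousAt.2 fun x => (hu x).continuousAt
  have cu₁ : Continuous u₁ := continuous_iff_continuousAt.2 fun x => (hu₁ x).continuousAt
  have cu₂ : Continuous u₂ := continuous_iff_continuousAt.2 fun x => (hu₂ x).continuousAt
  have hflux : ∫ x in a..b, (u₂ x + u x) * (-g x - u x * u₁ x)
      = -∫ x in a..b, (u₃ x + u₁ x) * F x :=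
    integral_mul_deriv_eq_neg_deriv_mul (fun x _ => (hu₂ x).add (hu x)) (fun x _ => hF x)
      ((hu₃.add cu₁).intervalIntegrable a b)
      ((hg.neg.sub (cu.mul cu₁)).intervalIntegrable a b) (by rw [hub, hu₂b, hFb])
  have hcubic : ∫ x in a..b, u x ^ 2 * u₁ x = 0 := by
    rw [integral_eq_sub_of_hasDerivAt (f := fun x => u x ^ 3 / 3)
      (f' := fun x => u x ^ 2 * u₁ x)
      (fun x _ => (((hu x).pow 3).div_const 3).congr_deriv (by ring))
      (((cu.pow 2).mul cu₁).intervalIntegrable a b), hub, sub_self]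
  have hquad : ∫ x in a..b, u x ^ 2 * u₃ x = -∫ x in a..b, 2 * (u x * u₁ x) * u₂ x :=
    integral_mul_deriv_eq_neg_deriv_mul
      (fun x _ => ((hu x).pow 2).congr_deriv (by ring)) (fun x _ => hu₂ x)
      ((continuous_const.mul (cu.mul cu₁)).intervalIntegrable a b) (hu₃.intervalIntegrable a b)
      (by rw [hub, hu₂b])
  calc ∫ x in a..b, g x * (u₂ x + u x)
      = ∫ x in a..b, (-((u₂ x + u x) * (-g x - u x * u₁ x))
          - (1 / 2) * (2 * (u x * u₁ x) * u₂ x) - u x ^ 2 * u₁ x) :=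
        integral_congr fun x _ => by ring
    _ = -(∫ x in a..b, (u₂ x + u x) * (-g x - u x * u₁ x))
          - (1 / 2) * (∫ x in a..b, 2 * (u x * u₁ x) * u₂ x) - ∫ x in a..b, u x ^ 2 * u₁ x := by
        rw [integral_sub, integral_sub, integral_neg, integral_const_mul]
        all_goals exact Continuous.intervalIntegrable (by fun_prop) a b
    _ = _ := by rw [hflux, hcubic, hquad]; ring

theorem ContinuousOn.continuous_uncurry_right {α β γ : Type*} [TopologicalSpace α]
    [TopologicalSpace β] [TopologicalSpace γ] {F : α → β → γ} {s : Set β}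
    (hF : ContinuousOn (fun p : α × β => F p.1 p.2) (univ ×ˢ s)) {b : β} (hb : b ∈ s) :
    Continuous (F · b) :=
  continuousOn_univ.1 (hF.uncurry_right b hb)

theorem ContinuousOn.continuous_comp_projIcc {F : ℝ → ℝ → ℝ} {c d : ℝ} (hcd : c ≤ d)
    (hF : ContinuousOn (fun p : ℝ × ℝ => F p.1 p.2) (univ ×ˢ Icc c d)) :
    Continuous fun p : ℝ × ℝ => F p.1 (projIcc c d hcd p.2) :=
  hF.comp_continuous (f := fun p : ℝ × ℝ => (p.1, (projIcc c d hcd p.2 : ℝ))) (by fun_prop)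
    fun p => ⟨mem_univ _, (projIcc c d hcd p.2).2⟩

theorem continuousOn_intervalIntegral_of_continuousOn {F : ℝ → ℝ → ℝ} {c d : ℝ}
    (hF : ContinuousOn (fun p : ℝ × ℝ => F p.1 p.2) (univ ×ˢ Icc c d)) (a b : ℝ) :
    ContinuousOn (fun t => ∫ x in a..b, F x t) (Icc c d) := by
  intro t ht
  have hcd : c ≤ d := ht.1.trans ht.2
  have hext := continuous_parametric_intervalIntegral_of_continuous' (μ := volume)
    (f := fun t x => F x (projIcc c d hcd t))
    ((hF.continuous_comp_projIcc hcd).comp continuous_swap) a b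
  refine hext.continuousWithinAt.congr (fun s hs => ?_) ?_ <;>
    simp [projIcc_of_mem hcd, *]

theorem sub_eq_mul_integral_of_hasDerivWithinAt {f f' : ℝ → ℝ} {c d s t : ℝ}
    (hf : ∀ r ∈ Icc c d, HasDerivWithinAt f (f' r) (Icc c d) r) (hf' : ContinuousOn f' (Icc c d))
    (hs : s ∈ Icc c d) (ht : t ∈ Icc c d) :
    f s - f t = (s - t) * ∫ θ in (0:ℝ)..1, f' (t + (s - t) * θ) := by
  have hsub : uIcc t s ⊆ Icc c d := uIcc_subset_Icc ht hs
  have hftc : ∫ r in t..s, f' r = f s - f t := by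
    refine integral_eq_sub_of_hasDeriv_right
      (fun r hr => (hf r (hsub hr)).continuousWithinAt.mono hsub) (fun r hr => ?_)
      ((hf'.mono hsub).intervalIntegrable)
    have hr' : Icc c d ∈ nhds r :=
      Icc_mem_nhds ((le_min ht.1 hs.1).trans_lt hr.1) (hr.2.trans_le (max_le ht.2 hs.2))
    exact ((hf r (hsub (mem_Icc_of_Ioo hr))).hasDerivAt hr').hasDerivWithinAt
  rw [← hftc, ← smul_eq_mul, smul_integral_comp_add_mul]
  simp

theorem hasDerivWithinAt_of_sub_eq_mul {f g : ℝ → ℝ} {s : Set ℝ} {t : ℝ}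
    (hfg : ∀ r ∈ s, f r - f t = (r - t) * g r) (hg : ContinuousWithinAt g s t) :
    HasDerivWithinAt f (g t) s t := by
  rw [hasDerivWithinAt_iff_tendsto_slope]
  refine (hg.mono sdiff_subset).tendsto.congr' ?_
  filter_upwards [self_mem_nhdsWithin] with r ⟨hr, hrt⟩
  rw [slope_def_field, hfg r hr, mul_div_cancel_left₀ _ (sub_ne_zero.2 hrt)]

theorem hasDerivWithinAt_integral_mul_of_symm {a b c d t : ℝ} {u u' w : ℝ → ℝ → ℝ}
    (hu : ContinuousOn (fun p : ℝ × ℝ => u p.1 p.2) (univ ×ˢ Icc c d))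
    (hu' : ContinuousOn (fun p : ℝ × ℝ => u' p.1 p.2) (univ ×ˢ Icc c d))
    (hw : ContinuousOn (fun p : ℝ × ℝ => w p.1 p.2) (univ ×ˢ Icc c d))
    (hderiv : ∀ x, ∀ r ∈ Icc c d, HasDerivWithinAt (u x) (u' x r) (Icc c d) r)
    (hsymm : ∀ r ∈ Icc c d, ∀ s ∈ Icc c d,
      ∫ x in a..b, u x r * w x s = ∫ x in a..b, u x s * w x r)
    (ht : t ∈ Icc c d) :
    HasDerivWithinAt (fun s => ∫ x in a..b, u x s * w x s)
      (2 * ∫ x in a..b, u' x t * w x t) (Icc c d) t := by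
  have hcd : c ≤ d := ht.1.trans ht.2
  -- extensions of `u'` and `w` that are continuous on all of `ℝ × ℝ`
  set U' := fun x r => u' x (projIcc c d hcd r)
  set W := fun x r => w x (projIcc c d hcd r)
  have hU' : Continuous (uncurry U') := hu'.continuous_comp_projIcc hcd
  have hW : Continuous (uncurry W) := hw.continuous_comp_projIcc hcd
  -- `D x s` is the slope of `u x` between `t` and `s`, in a form continuous in `(x, s)`
  set D := fun x s => ∫ θ in (0:ℝ)..1, U' x (t + (s - t) * θ)
  have hD : ∀ x, ∀ s ∈ Icc c d, u x s - u x t = (s - t) * D x s := fun x s hs =>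
    sub_eq_mul_integral_of_hasDerivWithinAt
      (fun r hr => by simpa [U', projIcc_of_mem hcd hr] using hderiv x r hr)
      (hU'.uncurry_left x).continuousOn hs ht
  have hDc : Continuous (uncurry D) :=
    continuous_parametric_intervalIntegral_of_continuous' (μ := volume)
      (f := fun (p : ℝ × ℝ) θ => U' p.1 (t + (p.2 - t) * θ)) (by fun_prop) 0 1
  have hint : ∀ r ∈ Icc c d, ∀ s ∈ Icc c d,
      IntervalIntegrable (fun x => u x r * w x s) volume a b :=
    fun r hr s hs => ((hu.continuous_uncurry_right hr).mul
      (hw.continuous_uncurry_right hs)).intervalIntegrable a b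
  have hslope : ∀ s ∈ Icc c d, (∫ x in a..b, u x s * w x s) - ∫ x in a..b, u x t * w x t
      = (s - t) * ∫ x in a..b, D x s * (W x s + W x t) := by
    intro s hs
    calc (∫ x in a..b, u x s * w x s) - ∫ x in a..b, u x t * w x t
        = ∫ x in a..b, (u x s - u x t) * (w x s + w x t) := by
          have hexpand : ∫ x in a..b, (u x s - u x t) * (w x s + w x t)
              = ((∫ x in a..b, u x s * w x s) - ∫ x in a..b, u x t * w x t)
                + ((∫ x in a..b, u x s * w x t) - ∫ x in a..b, u x t * w x s) := by
            rw [← integral_sub (hint s hs s hs) (hint t ht t ht),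
              ← integral_sub (hint s hs t ht) (hint t ht s hs),
              ← integral_add ((hint s hs s hs).sub (hint t ht t ht))
                ((hint s hs t ht).sub (hint t ht s hs))]
            exact integral_congr fun x _ => by ring
          rw [hexpand, hsymm s hs t ht, sub_self, add_zero]
      _ = ∫ x in a..b, (s - t) * (D x s * (W x s + W x t)) := by
          refine integral_congr fun x _ => ?_
          simp only [W, projIcc_of_mem hcd hs, projIcc_of_mem hcd ht, hD x s hs]
          ring
      _ = _ := integral_const_mul _ _
  have hquot : Continuous fun s => ∫ x in a..b, D x s * (W x s + W x t) :=
    continuous_parametric_intervalIntegral_of_continuous' (μ := volume)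
      (f := fun s x => D x s * (W x s + W x t)) (by fun_prop) a b
  refine (hasDerivWithinAt_of_sub_eq_mul hslope hquot.continuousWithinAt).congr_deriv ?_
  rw [← integral_const_mul]
  refine integral_congr fun x _ => ?_
  simp [D, U', W, projIcc_of_mem hcd ht]
  ring

theorem integral_eq_sub_of_hasDerivWithinAt_Icc {f f' : ℝ → ℝ} {c d : ℝ} (hcd : c ≤ d)
    (hf : ∀ t ∈ Icc c d, HasDerivWithinAt f (f' t) (Icc c d) t)
    (hf' : IntervalIntegrable f' volume c d) :
    ∫ t in c..d, f' t = f d - f c :=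
  integral_eq_sub_of_hasDeriv_right_of_le hcd (fun t ht => (hf t ht).continuousWithinAt)
    (fun t ht => ((hf t (Ioo_subset_Icc_self ht)).hasDerivAt
      (Icc_mem_nhds ht.1 ht.2)).hasDerivWithinAt) hf'

namespace ClassicalSolutionI

variable {a S ε T t : ℝ} {h hx hxx hxxx hxxxx ht : ℝ → ℝ → ℝ}

theorem eq_at_endpoints (hsol : ClassicalSolutionI a S ε T h hx hxx hxxx hxxxx ht)
    (htT : t ∈ Icc 0 T) :
    h a t = h (-a) t ∧ hx a t = hx (-a) t ∧ hxx a t = hxx (-a) t ∧ hxxx a t = hxxx (-a) t := by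
  have p₀ : Periodic (h · t) (2 * a) := fun x => hsol.periodic_x x t
  have p₁ := p₀.of_hasDerivAt (hsol.deriv_hx · t htT)
  have p₂ := p₁.of_hasDerivAt (hsol.deriv_hxx · t htT)
  have p₃ := p₂.of_hasDerivAt (hsol.deriv_hxxx · t htT)
  exact ⟨p₀.apply_eq_apply_neg, p₁.apply_eq_apply_neg, p₂.apply_eq_apply_neg,
    p₃.apply_eq_apply_neg⟩

theorem hasDerivWithinAt_energy (hsol : ClassicalSolutionI a S ε T h hx hxx hxxx hxxxx ht)
    (htT : t ∈ Icc 0 T) :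
    HasDerivWithinAt (fun s => (1/2) * ∫ x in (-a)..a, ((hx x s)^2 - (h x s)^2))
      (-(S * ∫ x in (-a)..a, (|h x t| ^ 3 + ε) * (hx x t + hxxx x t)^2)
        - (1/2) * ∫ x in (-a)..a, (h x t)^2 * hxxx x t) (Icc 0 T) t := by
  have hsymm : ∀ r ∈ Icc 0 T, ∀ s ∈ Icc 0 T, ∫ x in (-a)..a, h x r * (hxx x s + h x s)
      = ∫ x in (-a)..a, h x s * (hxx x r + h x r) := by
    intro r hr s hs
    obtain ⟨er₀, er₁, -, -⟩ := hsol.eq_at_endpoints hr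
    obtain ⟨es₀, es₁, -, -⟩ := hsol.eq_at_endpoints hs
    rw [integral_mul_second_deriv_add (hsol.deriv_hx · r hr) (hsol.deriv_hx · s hs)
        (hsol.deriv_hxx · s hs) (hsol.cont_hx.continuous_uncurry_right hr)
        (hsol.cont_hxx.continuous_uncurry_right hs) (by rw [er₀, es₁]),
      integral_mul_second_deriv_add (hsol.deriv_hx · s hs) (hsol.deriv_hx · r hr)
        (hsol.deriv_hxx · r hr) (hsol.cont_hx.continuous_uncurry_right hs)
        (hsol.cont_hxx.continuous_uncurry_right hr) (by rw [es₀, er₁])]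
    exact integral_congr fun x _ => by ring
  have henergy : ∀ s ∈ Icc 0 T, (1/2) * ∫ x in (-a)..a, ((hx x s)^2 - (h x s)^2)
      = -(1/2) * ∫ x in (-a)..a, h x s * (hxx x s + h x s) := by
    intro s hs
    obtain ⟨e₀, e₁, -, -⟩ := hsol.eq_at_endpoints hs
    rw [integral_mul_second_deriv_add (hsol.deriv_hx · s hs) (hsol.deriv_hx · s hs)
      (hsol.deriv_hxx · s hs) (hsol.cont_hx.continuous_uncurry_right hs)
      (hsol.cont_hxx.continuous_uncurry_right hs) (by rw [e₀, e₁]),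
      neg_mul, ← mul_neg, ← integral_neg]
    exact congrArg _ (integral_congr fun x _ => by ring)
  obtain ⟨e₀, e₁, e₂, e₃⟩ := hsol.eq_at_endpoints htT
  have hrate : ∫ x in (-a)..a, ht x t * (hxx x t + h x t)
      = S * (∫ x in (-a)..a, (|h x t| ^ 3 + ε) * (hx x t + hxxx x t)^2)
        + (1/2) * ∫ x in (-a)..a, (h x t)^2 * hxxx x t := by
    rw [integral_mul_second_deriv_add_of_conservation (hsol.deriv_hx · t htT)
      (hsol.deriv_hxx · t htT) (hsol.deriv_hxxx · t htT) (hsol.pde · t htT)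
      (hsol.cont_hxxx.continuous_uncurry_right htT) (hsol.cont_ht.continuous_uncurry_right htT)
      e₀ e₂ (by simp only [e₀, e₁, e₃])]
    congr 1
    rw [← integral_const_mul]
    exact integral_congr fun x _ => by ring
  have hK := hasDerivWithinAt_integral_mul_of_symm hsol.cont_h hsol.cont_ht
    (hsol.cont_hxx.add hsol.cont_h) hsol.deriv_ht hsymm htT
  refine ((hK.const_mul (-(1/2))).congr_of_mem henergy htT).congr_deriv ?_
  rw [hrate]
  ring

end ClassicalSolutionI

theorem modelI_integrated_energy_identity_general
    (a S ε T : ℝ)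
    (h hx hxx hxxx hxxxx ht : ℝ → ℝ → ℝ)
    (hsol : ClassicalSolutionI a S ε T h hx hxx hxxx hxxxx ht) :
    ∀ T' ∈ Set.Icc (0:ℝ) T,
      (1/2) * (∫ x in (-a)..a, ((hx x T')^2 - (h x T')^2))
        + S * ∫ t in (0:ℝ)..T', ∫ x in (-a)..a,
            (|h x t| ^ 3 + ε) * (hx x t + hxxx x t)^2
      = (1/2) * (∫ x in (-a)..a, ((hx x 0)^2 - (h x 0)^2))
        - (1/2) * ∫ t in (0:ℝ)..T', ∫ x in (-a)..a, (h x t)^2 * hxxx x t := by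
  intro T' hT'
  have hsub : Icc 0 T' ⊆ Icc 0 T := Icc_subset_Icc_right hT'.2
  have hdiss := continuousOn_intervalIntegral_of_continuousOn
    (F := fun x t => (|h x t| ^ 3 + ε) * (hx x t + hxxx x t)^2)
    (((hsol.cont_h.abs.pow 3).add continuousOn_const).mul
      ((hsol.cont_hx.add hsol.cont_hxxx).pow 2)) (-a) a
  have hcross := continuousOn_intervalIntegral_of_continuousOn
    (F := fun x t => (h x t)^2 * hxxx x t) ((hsol.cont_h.pow 2).mul hsol.cont_hxxx) (-a) a
  have hint : ∀ {φ : ℝ → ℝ}, ContinuousOn φ (Icc 0 T) → IntervalIntegrable φ volume 0 T' :=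
    fun hφ => (hφ.mono (by rw [uIcc_of_le hT'.1]; exact hsub)).intervalIntegrable
  have hftc := integral_eq_sub_of_hasDerivWithinAt_Icc hT'.1
    (fun t ht => (hsol.hasDerivWithinAt_energy (hsub ht)).mono hsub)
    (hint ((continuousOn_const.mul hdiss).neg.sub (continuousOn_const.mul hcross)))
  rw [integral_sub, integral_neg, integral_const_mul, integral_const_mul] at hftc
  · linarith
  · exact ((hint hdiss).const_mul S).neg
  · exact (hint hcross).const_mul _

/-- Integrated energy identity for regularized Model I: with
`𝓔(u) = (1/2)∫ (u_x² - u²) dx`,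
`𝓔(h(·,T')) + S∫₀^{T'}∫ (|h|³+ε)(h_x+h_xxx)² = 𝓔(h(·,0)) - (1/2)∫₀^{T'}∫ h² h_xxx`. -/
theorem modelI_integrated_energy_identity
    (a S ε T : ℝ) (ha : 0 < a) (hS : 0 < S) (hε : 0 < ε) (hT : 0 < T)
    (h hx hxx hxxx hxxxx ht : ℝ → ℝ → ℝ)
    (hsol : ClassicalSolutionI a S ε T h hx hxx hxxx hxxxx ht) :
    ∀ T' ∈ Set.Icc (0:ℝ) T,
      (1/2) * (∫ x in (-a)..a, ((hx x T')^2 - (h x T')^2))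
        + S * ∫ t in (0:ℝ)..T', ∫ x in (-a)..a,
            (|h x t| ^ 3 + ε) * (hx x t + hxxx x t)^2
      = (1/2) * (∫ x in (-a)..a, ((hx x 0)^2 - (h x 0)^2))
        - (1/2) * ∫ t in (0:ℝ)..T', ∫ x in (-a)..a, (h x t)^2 * hxxx x t :=
  modelI_integrated_energy_identity_general a S ε T h hx hxx hxxx hxxxx ht hsol
end

section
/- Assume 0 < a < π/2. Let h be a classical periodic solution of the regularized Model I equation on [0,T], and fix any A > 0. Then for all 0 ≤ T₁ ≤ T₂ ≤ T, ∫_{−a}^{a} G_ε(h(x,T₂)) dx + S·( 1 − (2a/π)² )·∫_{T₁}^{T₂} ∫_{−a}^{a} h_xx² dx dt ≤ ∫_{−a}^{a} G_ε(h(x,T₁)) dx. In particular, the function T′ ↦ ∫_{−a}^{a} G_ε(h(x,T′)) dx is nonincreasing on [0,T]. -/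
/-- `g_ε(s) = -∫_s^A dr / (|r|³ + ε)`. -/
noncomputable def gEps (A ε s : ℝ) : ℝ := -∫ r in s..A, 1 / (|r| ^ 3 + ε)

/-- `G_ε(s) = -∫_s^A g_ε(r) dr`. -/
noncomputable def GEps (A ε s : ℝ) : ℝ := -∫ r in s..A, gEps A ε r

/-!
Since `g_ε' = 1/(|h|³+ε)`, multiplying the equation by `g_ε(h)` turns the
degenerate fourth-order term into `S (h_x + h_xxx)_x`, so integrating over a period gives
`d/dt ∫ G_ε(h) = ∫ g_ε(h) h_t = S ∫ h_x² - S ∫ h_xx²`. The periodic function `h_x` has mean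
zero, so Wirtinger's inequality (Parseval, with `ĥ_x(n) = (2π i n / 2a) ĥ(n)`) bounds
`∫ h_x² ≤ (a/π)² ∫ h_xx² ≤ (2a/π)² ∫ h_xx²`; integrating in time finishes the proof.
-/

open MeasureTheory intervalIntegral Real Set Filter Topology

theorem Function.Periodic.of_hasDerivAt_s9 {g g' : ℝ → ℝ} {p : ℝ} (hg : Function.Periodic g p)
    (hd : ∀ x, HasDerivAt g (g' x) x) : Function.Periodic g' p := fun x =>
  ((hd (x + p)).comp_add_const x p |>.congr_of_eventuallyEq
    (Eventually.of_forall fun y => (hg y).symm)).unique (hd x)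

theorem integral_eq_zero_of_hasDerivAt_of_periodic {g g' : ℝ → ℝ} {α β : ℝ}
    (hg : Function.Periodic g (β - α)) (hd : ∀ x, HasDerivAt g (g' x) x)
    (hint : IntervalIntegrable g' volume α β) : ∫ x in α..β, g' x = 0 := by
  rw [integral_eq_sub_of_hasDerivAt (fun x _ => hd x) hint, ← hg α, add_sub_cancel, sub_self]

theorem ContinuousOn.continuous_apply_right {F : ℝ → ℝ → ℝ} {s : Set ℝ}
    (hF : ContinuousOn (fun p : ℝ × ℝ => F p.1 p.2) (univ ×ˢ s)) {t : ℝ} (ht : t ∈ s) :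
    Continuous (fun x => F x t) :=
  hF.comp_continuous (continuous_id.prodMk continuous_const) fun _ => ⟨trivial, ht⟩

theorem ContinuousOn.continuousOn_apply_left {F : ℝ → ℝ → ℝ} {s : Set ℝ}
    (hF : ContinuousOn (fun p : ℝ × ℝ => F p.1 p.2) (univ ×ˢ s)) (x : ℝ) :
    ContinuousOn (F x) s :=
  hF.comp (continuous_const.prodMk continuous_id).continuousOn fun _ hs => ⟨trivial, hs⟩

section Rectangle

variable {F : ℝ → ℝ → ℝ} {a b c d : ℝ}

theorem integrable_uncurry_of_continuousOn
    (hF : ContinuousOn (fun p : ℝ × ℝ => F p.1 p.2) (Icc a b ×ˢ Icc c d)) :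
    Integrable (Function.uncurry F)
      ((volume.restrict (Ioc a b)).prod (volume.restrict (Ioc c d))) := by
  rw [Measure.prod_restrict]
  exact (hF.integrableOn_compact (isCompact_Icc.prod isCompact_Icc)).mono_set
    (prod_mono Ioc_subset_Icc_self Ioc_subset_Icc_self)

theorem integral_integral_swap_of_continuousOn (hab : a ≤ b) (hcd : c ≤ d)
    (hF : ContinuousOn (fun p : ℝ × ℝ => F p.1 p.2) (Icc a b ×ˢ Icc c d)) :
    ∫ x in a..b, ∫ t in c..d, F x t = ∫ t in c..d, ∫ x in a..b, F x t := by
  simp only [integral_of_le hab, integral_of_le hcd]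
  exact integral_integral_swap (integrable_uncurry_of_continuousOn hF)

theorem intervalIntegrable_integral_of_continuousOn (hab : a ≤ b) (hcd : c ≤ d)
    (hF : ContinuousOn (fun p : ℝ × ℝ => F p.1 p.2) (Icc a b ×ˢ Icc c d)) :
    IntervalIntegrable (fun t => ∫ x in a..b, F x t) volume c d := by
  rw [intervalIntegrable_iff_integrableOn_Ioc_of_le hcd]
  simp only [integral_of_le hab]
  exact (integrable_uncurry_of_continuousOn hF).integral_prod_right

end Rectangle

theorem integral_eq_sub_of_hasDerivWithinAt_Icc_s9 {φ φ' : ℝ → ℝ} {c d t₁ t₂ : ℝ}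
    (hφ : ∀ t ∈ Icc c d, HasDerivWithinAt φ (φ' t) (Icc c d) t) (hφ' : ContinuousOn φ' (Icc c d))
    (hc : c ≤ t₁) (h12 : t₁ ≤ t₂) (hd : t₂ ≤ d) :
    ∫ t in t₁..t₂, φ' t = φ t₂ - φ t₁ := by
  have hsub : Icc t₁ t₂ ⊆ Icc c d := Icc_subset_Icc hc hd
  refine integral_eq_sub_of_hasDerivAt_of_le h12
    (fun t ht => ((hφ t (hsub ht)).continuousWithinAt).mono hsub) (fun t ht => ?_)
    ((hφ'.mono hsub).intervalIntegrable_of_Icc h12)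
  exact (hφ t (hsub (Ioo_subset_Icc_self ht))).hasDerivAt
    (Icc_mem_nhds (hc.trans_lt ht.1) (ht.2.trans_le hd))

theorem Continuous.memLp_restrict_Ioc {f : ℝ → ℂ} (hf : Continuous f) (p : ENNReal) (a b : ℝ) :
    MemLp f p (volume.restrict (Ioc a b)) := by
  obtain ⟨C, hC⟩ :=
    (isCompact_Icc (a := a) (b := b)).exists_bound_of_continuousOn hf.continuousOn
  exact MemLp.of_bound hf.aestronglyMeasurable C <| (ae_restrict_iff' measurableSet_Ioc).2 <|
    ae_of_all _ fun x hx => hC x (Ioc_subset_Icc_self hx)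

theorem norm_fourierCoeffOn_le_of_hasDerivAt {f f' : ℝ → ℂ} {α β : ℝ} (hαβ : α < β)
    (hf : ∀ x, HasDerivAt f (f' x) x) (hf' : IntervalIntegrable f' volume α β) (hper : f α = f β)
    (hmean : ∫ x in α..β, f x = 0) (n : ℤ) :
    ‖fourierCoeffOn hαβ f n‖ ≤ (β - α) / (2 * π) * ‖fourierCoeffOn hαβ f' n‖ := by
  rcases eq_or_ne n 0 with rfl | hn
  · have hzero : fourierCoeffOn hαβ f 0 = 0 := by simp [fourierCoeffOn_eq_integral, hmean]
    rw [hzero, norm_zero]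
    positivity
  · rw [fourierCoeffOn_of_hasDerivAt hαβ hn (fun x _ => hf x) hf',
      hper, sub_self, mul_zero, zero_sub]
    have hn1 : (1 : ℝ) ≤ |(n : ℝ)| := by
      rw [← Int.cast_abs]; exact_mod_cast Int.one_le_abs hn
    have hL : 0 < β - α := sub_pos.2 hαβ
    rw [← Complex.ofReal_sub]
    simp only [norm_mul, norm_div, norm_neg, norm_one, Complex.norm_real, Complex.norm_I,
      Complex.norm_intCast, Complex.norm_ofNat, Real.norm_eq_abs, abs_of_pos hL, abs_of_pos pi_pos]
    calc _ = (β - α) / (2 * π) * ‖fourierCoeffOn hαβ f' n‖ / |(n : ℝ)| := by field_simp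
      _ ≤ _ := div_le_self (by positivity) hn1

theorem integral_sq_le_of_periodic_of_integral_eq_zero {u u' : ℝ → ℝ} {α β : ℝ} (hαβ : α < β)
    (hu : ∀ x, HasDerivAt u (u' x) x) (hu' : Continuous u') (hper : u α = u β)
    (hmean : ∫ x in α..β, u x = 0) :
    ∫ x in α..β, u x ^ 2 ≤ ((β - α) / (2 * π)) ^ 2 * ∫ x in α..β, u' x ^ 2 := by
  have hL : 0 < β - α := sub_pos.2 hαβ
  have hucont : Continuous u := continuous_iff_continuousAt.2 fun x => (hu x).continuousAt
  have hsq : ∀ v : ℝ → ℝ, Continuous v →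
      HasSum (fun n => ‖fourierCoeffOn hαβ (fun x => (v x : ℂ)) n‖ ^ 2)
        ((β - α)⁻¹ * ∫ x in α..β, v x ^ 2) := by
    intro v hv
    simpa [Function.comp_def, Complex.norm_real, sq_abs] using
      hasSum_sq_fourierCoeffOn hαβ ((Complex.continuous_ofReal.comp hv).memLp_restrict_Ioc 2 α β)
  have hcoeff : ∀ n, ‖fourierCoeffOn hαβ (fun x => (u x : ℂ)) n‖ ^ 2
      ≤ ((β - α) / (2 * π)) ^ 2 * ‖fourierCoeffOn hαβ (fun x => (u' x : ℂ)) n‖ ^ 2 := fun n => by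
    rw [← mul_pow]
    gcongr
    refine norm_fourierCoeffOn_le_of_hasDerivAt hαβ (fun x => (hu x).ofReal_comp)
      ((Complex.continuous_ofReal.comp hu').intervalIntegrable _ _) (by simp [hper]) ?_ n
    rw [intervalIntegral.integral_ofReal, hmean, Complex.ofReal_zero]
  have hle := hasSum_le hcoeff (hsq u hucont) ((hsq u' hu').mul_left (((β - α) / (2 * π)) ^ 2))
  rw [← mul_assoc, mul_comm _ (β - α)⁻¹, mul_assoc] at hle
  exact le_of_mul_le_mul_left hle (inv_pos.2 hL)

theorem hasDerivAt_neg_integral_left {f : ℝ → ℝ} (hf : Continuous f) (b s : ℝ) :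
    HasDerivAt (fun s => -∫ r in s..b, f r) (f s) s :=
  (integral_hasDerivAt_left (hf.intervalIntegrable s b)
    (hf.stronglyMeasurableAtFilter _ _) hf.continuousAt).fun_neg.congr_deriv (neg_neg _)

theorem hasDerivAt_gEps (A : ℝ) {ε : ℝ} (hε : 0 < ε) (s : ℝ) :
    HasDerivAt (gEps A ε) (1 / (|s| ^ 3 + ε)) s :=
  hasDerivAt_neg_integral_left (by fun_prop (disch := intro; positivity)) A s

theorem continuous_gEps (A : ℝ) {ε : ℝ} (hε : 0 < ε) : Continuous (gEps A ε) :=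
  continuous_iff_continuousAt.2 fun s => (hasDerivAt_gEps A hε s).continuousAt

theorem hasDerivAt_GEps (A : ℝ) {ε : ℝ} (hε : 0 < ε) (s : ℝ) :
    HasDerivAt (GEps A ε) (gEps A ε s) s :=
  hasDerivAt_neg_integral_left (continuous_gEps A hε) A s

theorem continuous_GEps (A : ℝ) {ε : ℝ} (hε : 0 < ε) : Continuous (GEps A ε) :=
  continuous_iff_continuousAt.2 fun s => (hasDerivAt_GEps A hε s).continuousAt

theorem integral_gEps_mul_eq_of_flux {α β S ε A : ℝ} (hε : 0 < ε) {u u₁ u₂ u₃ v : ℝ → ℝ}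
    (hper : Function.Periodic u (β - α)) (hu : ∀ x, HasDerivAt u (u₁ x) x)
    (hu₁ : ∀ x, HasDerivAt u₁ (u₂ x) x) (hu₂ : ∀ x, HasDerivAt u₂ (u₃ x) x) (hv : Continuous v)
    (hflux : ∀ x, HasDerivAt (fun y => S * ((|u y| ^ 3 + ε) * (u₁ y + u₃ y)))
      (-v x - u x * u₁ x) x) :
    ∫ x in α..β, gEps A ε (u x) * v x
      = S * (∫ x in α..β, u₁ x ^ 2) - S * ∫ x in α..β, u₂ x ^ 2 := by
  have hper₁ := hper.of_hasDerivAt_s9 hu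
  have hper₂ := hper₁.of_hasDerivAt_s9 hu₁
  have hper₃ := hper₂.of_hasDerivAt_s9 hu₂
  have hcu : Continuous u := continuous_iff_continuousAt.2 fun x => (hu x).continuousAt
  have hcu₁ : Continuous u₁ := continuous_iff_continuousAt.2 fun x => (hu₁ x).continuousAt
  have hcu₂ : Continuous u₂ := continuous_iff_continuousAt.2 fun x => (hu₂ x).continuousAt
  have hg := continuous_gEps A hε
  have hgid : Continuous fun q => gEps A ε q * q := hg.mul continuous_id
  set Φ : ℝ → ℝ := fun s => ∫ q in (0 : ℝ)..s, gEps A ε q * q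
  have hΦ : ∀ s, HasDerivAt Φ (gEps A ε s * s) s := fun s =>
    integral_hasDerivAt_right (hgid.intervalIntegrable _ _) (hgid.stronglyMeasurableAtFilter _ _)
      hgid.continuousAt
  set K : ℝ → ℝ := fun y => -Φ (u y) - gEps A ε (u y) * (S * ((|u y| ^ 3 + ε) * (u₁ y + u₃ y)))
    + S * (u₁ y * u₂ y)
  have hK : ∀ x, HasDerivAt K (gEps A ε (u x) * v x - S * u₁ x ^ 2 + S * u₂ x ^ 2) x := by
    intro x
    have hpos : 0 < |u x| ^ 3 + ε := by positivity
    refine ((((hΦ (u x)).comp x (hu x)).neg.sub (((hasDerivAt_gEps A hε (u x)).comp x (hu x)).mul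
      (hflux x))).add (((hu₁ x).mul (hu₂ x)).const_mul S)).congr_deriv ?_
    simp only [Function.comp_apply]
    field_simp
    ring
  have hKper : Function.Periodic K (β - α) := fun x => by
    simp only [K, hper x, hper₁ x, hper₂ x, hper₃ x]
  have hzero := integral_eq_zero_of_hasDerivAt_of_periodic hKper hK
    (Continuous.intervalIntegrable (by fun_prop) _ _)
  rw [integral_add (Continuous.intervalIntegrable (by fun_prop) _ _)
      (Continuous.intervalIntegrable (by fun_prop) _ _),
    integral_sub (Continuous.intervalIntegrable (by fun_prop) _ _)
      (Continuous.intervalIntegrable (by fun_prop) _ _),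
    intervalIntegral.integral_const_mul, intervalIntegral.integral_const_mul] at hzero
  linarith

namespace ClassicalSolutionI

variable {a S ε T A : ℝ} {h hx hxx hxxx hxxxx ht : ℝ → ℝ → ℝ}

theorem periodic_section (hsol : ClassicalSolutionI a S ε T h hx hxx hxxx hxxxx ht) (t : ℝ) :
    Function.Periodic (fun x => h x t) (a - -a) := fun x => by
  rw [sub_neg_eq_add, ← two_mul]
  exact hsol.periodic_x x t

theorem integral_gEps_mul_ht (hsol : ClassicalSolutionI a S ε T h hx hxx hxxx hxxxx ht)
    (hε : 0 < ε) {t : ℝ} (htT : t ∈ Icc 0 T) :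
    ∫ x in (-a)..a, gEps A ε (h x t) * ht x t
      = S * (∫ x in (-a)..a, hx x t ^ 2) - S * ∫ x in (-a)..a, hxx x t ^ 2 :=
  integral_gEps_mul_eq_of_flux hε (hsol.periodic_section t) (hsol.deriv_hx · t htT)
    (hsol.deriv_hxx · t htT) (hsol.deriv_hxxx · t htT) (hsol.cont_ht.continuous_apply_right htT)
    (hsol.pde · t htT)

theorem integral_hx_sq_le (hsol : ClassicalSolutionI a S ε T h hx hxx hxxx hxxxx ht)
    (ha : 0 < a) {t : ℝ} (htT : t ∈ Icc 0 T) :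
    ∫ x in (-a)..a, hx x t ^ 2 ≤ (2 * a / π) ^ 2 * ∫ x in (-a)..a, hxx x t ^ 2 := by
  have hper := hsol.periodic_section t
  have hper' := hper.of_hasDerivAt_s9 (hsol.deriv_hx · t htT)
  have hmean : ∫ x in (-a)..a, hx x t = 0 :=
    integral_eq_zero_of_hasDerivAt_of_periodic hper (hsol.deriv_hx · t htT)
      ((hsol.cont_hx.continuous_apply_right htT).intervalIntegrable _ _)
  have hends : hx (-a) t = hx a t := by simpa only [add_sub_cancel] using (hper' (-a)).symm
  have hconst : (a - -a) / (2 * π) ≤ 2 * a / π := by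
    rw [div_le_div_iff₀ (by positivity) pi_pos]
    nlinarith [pi_pos]
  calc ∫ x in (-a)..a, hx x t ^ 2
      ≤ ((a - -a) / (2 * π)) ^ 2 * ∫ x in (-a)..a, hxx x t ^ 2 :=
        integral_sq_le_of_periodic_of_integral_eq_zero (by linarith) (hsol.deriv_hxx · t htT)
          (hsol.cont_hxx.continuous_apply_right htT) hends hmean
    _ ≤ (2 * a / π) ^ 2 * ∫ x in (-a)..a, hxx x t ^ 2 := by
        gcongr
        · exact integral_nonneg (by linarith) fun _ _ => sq_nonneg _
        · exact div_nonneg (by linarith) (by positivity)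

theorem GEps_sub_eq_integral (hsol : ClassicalSolutionI a S ε T h hx hxx hxxx hxxxx ht)
    (hε : 0 < ε) (x : ℝ) {T₁ T₂ : ℝ} (h0 : 0 ≤ T₁) (h12 : T₁ ≤ T₂) (h2 : T₂ ≤ T) :
    GEps A ε (h x T₂) - GEps A ε (h x T₁) = ∫ t in T₁..T₂, gEps A ε (h x t) * ht x t :=
  (integral_eq_sub_of_hasDerivWithinAt_Icc_s9
    (fun t htT => (hasDerivAt_GEps A hε _).comp_hasDerivWithinAt t (hsol.deriv_ht x t htT))
    (((continuous_gEps A hε).comp_continuousOn (hsol.cont_h.continuousOn_apply_left x)).mul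
      (hsol.cont_ht.continuousOn_apply_left x)) h0 h12 h2).symm

theorem entropy_dissipation (hsol : ClassicalSolutionI a S ε T h hx hxx hxxx hxxxx ht)
    (ha : 0 < a) (hS : 0 < S) (hε : 0 < ε) {T₁ T₂ : ℝ} (h0 : 0 ≤ T₁) (h12 : T₁ ≤ T₂)
    (h2 : T₂ ≤ T) :
    (∫ x in (-a)..a, GEps A ε (h x T₂))
        + S * (1 - (2 * a / π) ^ 2) * ∫ t in T₁..T₂, ∫ x in (-a)..a, hxx x t ^ 2
      ≤ ∫ x in (-a)..a, GEps A ε (h x T₁) := by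
  have haa : -a ≤ a := by linarith
  have hrect : Icc (-a) a ×ˢ Icc T₁ T₂ ⊆ univ ×ˢ Icc 0 T :=
    prod_mono (subset_univ _) (Icc_subset_Icc h0 h2)
  have hflow : ContinuousOn (fun p : ℝ × ℝ => gEps A ε (h p.1 p.2) * ht p.1 p.2)
      (Icc (-a) a ×ˢ Icc T₁ T₂) :=
    ((continuous_gEps A hε).comp_continuousOn (hsol.cont_h.mono hrect)).mul
      (hsol.cont_ht.mono hrect)
  have hdiss : ContinuousOn (fun p : ℝ × ℝ => hxx p.1 p.2 ^ 2) (Icc (-a) a ×ˢ Icc T₁ T₂) :=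
    (hsol.cont_hxx.mono hrect).pow 2
  have hentropy : ∀ {t}, t ∈ Icc 0 T →
      IntervalIntegrable (fun x => GEps A ε (h x t)) volume (-a) a := fun htT =>
    ((continuous_GEps A hε).comp (hsol.cont_h.continuous_apply_right htT)).intervalIntegrable _ _
  have hchange : (∫ x in (-a)..a, GEps A ε (h x T₂)) - ∫ x in (-a)..a, GEps A ε (h x T₁)
      = ∫ t in T₁..T₂, ∫ x in (-a)..a, gEps A ε (h x t) * ht x t := by
    rw [← integral_sub (hentropy ⟨h0.trans h12, h2⟩) (hentropy ⟨h0, h12.trans h2⟩),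
      ← integral_integral_swap_of_continuousOn haa h12 hflow]
    exact integral_congr fun x _ => hsol.GEps_sub_eq_integral hε x h0 h12 h2
  have hbound : ∫ t in T₁..T₂, ∫ x in (-a)..a, gEps A ε (h x t) * ht x t
      ≤ ∫ t in T₁..T₂, -(S * (1 - (2 * a / π) ^ 2)) * ∫ x in (-a)..a, hxx x t ^ 2 := by
    refine integral_mono_on h12 (intervalIntegrable_integral_of_continuousOn haa h12 hflow)
      ((intervalIntegrable_integral_of_continuousOn haa h12 hdiss).const_mul _) fun t htt => ?_
    have htT : t ∈ Icc 0 T := Icc_subset_Icc h0 h2 htt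
    rw [hsol.integral_gEps_mul_ht hε htT]
    nlinarith [hsol.integral_hx_sq_le ha htT]
  rw [intervalIntegral.integral_const_mul] at hbound
  linarith

end ClassicalSolutionI

theorem modelI_entropy_decreasing_general
    (a S ε T A : ℝ) (ha : 0 < a) (ha2 : a < Real.pi / 2) (hS : 0 < S) (hε : 0 < ε)
    (h hx hxx hxxx hxxxx ht : ℝ → ℝ → ℝ)
    (hsol : ClassicalSolutionI a S ε T h hx hxx hxxx hxxxx ht) :
    (∀ T₁ T₂ : ℝ, 0 ≤ T₁ → T₁ ≤ T₂ → T₂ ≤ T →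
      (∫ x in (-a)..a, GEps A ε (h x T₂))
        + S * (1 - (2 * a / Real.pi)^2) * ∫ t in T₁..T₂, ∫ x in (-a)..a, (hxx x t)^2
      ≤ ∫ x in (-a)..a, GEps A ε (h x T₁)) ∧
    AntitoneOn (fun T' => ∫ x in (-a)..a, GEps A ε (h x T')) (Set.Icc 0 T) := by
  refine ⟨fun T₁ T₂ h0 h12 h2 => hsol.entropy_dissipation ha hS hε h0 h12 h2,
    fun t₁ ht₁ t₂ ht₂ h12 => ?_⟩
  have hdecay := hsol.entropy_dissipation (A := A) ha hS hε ht₁.1 h12 ht₂.2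
  have hrate : 0 ≤ 1 - (2 * a / π) ^ 2 :=
    sub_nonneg.2 (pow_le_one₀ (by positivity) ((div_le_one pi_pos).2 (by linarith)))
  have hdiss : 0 ≤ ∫ t in t₁..t₂, ∫ x in (-a)..a, hxx x t ^ 2 :=
    integral_nonneg h12 fun _ _ => integral_nonneg (by linarith) fun _ _ => sq_nonneg _
  have hgain := mul_nonneg (mul_nonneg hS.le hrate) hdiss
  dsimp only
  linarith

/-- Entropy dissipation for regularized Model I when `a < π/2`: for `0 ≤ T₁ ≤ T₂ ≤ T`,
`∫ G_ε(h(·,T₂)) + S(1-(2a/π)²)∫_{T₁}^{T₂}∫ h_xx² ≤ ∫ G_ε(h(·,T₁))`; in particular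
`T' ↦ ∫ G_ε(h(·,T'))` is nonincreasing on `[0,T]`. -/
theorem modelI_entropy_decreasing
    (a S ε T A : ℝ) (ha : 0 < a) (ha2 : a < Real.pi / 2) (hS : 0 < S) (hε : 0 < ε)
    (hT : 0 < T) (hA : 0 < A)
    (h hx hxx hxxx hxxxx ht : ℝ → ℝ → ℝ)
    (hsol : ClassicalSolutionI a S ε T h hx hxx hxxx hxxxx ht) :
    (∀ T₁ T₂ : ℝ, 0 ≤ T₁ → T₁ ≤ T₂ → T₂ ≤ T →
      (∫ x in (-a)..a, GEps A ε (h x T₂))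
        + S * (1 - (2 * a / Real.pi)^2) * ∫ t in T₁..T₂, ∫ x in (-a)..a, (hxx x t)^2
      ≤ ∫ x in (-a)..a, GEps A ε (h x T₁)) ∧
    AntitoneOn (fun T' => ∫ x in (-a)..a, GEps A ε (h x T')) (Set.Icc 0 T) :=
  modelI_entropy_decreasing_general a S ε T A ha ha2 hS hε h hx hxx hxxx hxxxx ht hsol
end
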